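/- Let the ℤ/2-partial action σ on X = [-2,2] be given by σ_0 = id_X on X_0 = X and σ_1 : (-1,1) → (-1,1), σ_1(x) = -x. Then for all compact L, M ⊆ X the set ((L,M)) is compact, but the orbit space X/σ is not Hausdorff: the orbits [1] = {1} and [-1] = {-1} are distinct, yet every pair of open invariant sets U ∋ 1 and V ∋ -1 intersect. -/

import Mathlib

/-- The `ℤ/2`-partial action on `[-2,2]`: `σ_0 = id`, `σ_1(x) = -x` on `(-1,1)`. -/
noncomputable def act14 : ZMod 2 → ℝ → ℝ := fun t x => if t = 0 then x else -x

/-- Domains: `X_0 = [-2,2]`, `X_1 = (-1,1)`. -/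
def dom14 : ZMod 2 → Set ℝ := fun t => if t = 0 then Set.Icc (-2) 2 else Set.Ioo (-1) 1

/-- The orbit of a point `x ∈ [-2,2]` under the partial action. -/
noncomputable def orb14 (x : ℝ) : Set ℝ :=
  {y : ℝ | ∃ t : ZMod 2, x ∈ dom14 (-t) ∧ act14 t x = y}

/-- Invariance of a subset under the partial action. -/
def inv14 (U : Set ℝ) : Prop := ∀ x ∈ U, ∀ t : ZMod 2, x ∈ dom14 (-t) → act14 t x ∈ U

/- `1` and `-1` lie outside `X_1 = (-1,1)`, so their orbits are singletons. But `X_1` accumulates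
at both, and `σ_1` carries points of `X_1` near `-1` to points near `1`; hence an invariant
neighbourhood of `-1` contains points of `(0,1)` arbitrarily close to `1`, and so meets every
neighbourhood of `1`. Compactness of `((L,M))` is automatic, `ℤ/2` being finite. -/

open Set Filter Topology

@[simp]
lemma act14_zero (x : ℝ) : act14 0 x = x := if_pos rfl

@[simp]
lemma act14_one (x : ℝ) : act14 1 x = -x := if_neg one_ne_zero

@[simp]
lemma dom14_neg_zero : dom14 (-0) = Icc (-2) 2 := by simp [dom14]

@[simp]
lemma dom14_neg_one : dom14 (-1) = Ioo (-1) 1 := by simp [dom14]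

lemma orb14_eq_singleton {x : ℝ} (hx : x ∈ Icc (-2) 2) (hx' : x ∉ Ioo (-1) 1) :
    orb14 x = {x} := by
  ext y
  rw [mem_singleton_iff]
  constructor
  · rintro ⟨t, ht, rfl⟩
    obtain rfl | rfl := (by decide : ∀ t : ZMod 2, t = 0 ∨ t = 1) t
    · exact act14_zero x
    · exact absurd (dom14_neg_one ▸ ht) hx'
  · rintro rfl
    exact ⟨0, dom14_neg_zero ▸ hx, act14_zero _⟩

lemma inv14.neg_mem {U : Set ℝ} (hU : inv14 U) {x : ℝ} (hxU : x ∈ U) (hx : x ∈ Ioo (-1) 1) :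
    -x ∈ U := by
  simpa using hU x hxU 1 (dom14_neg_one ▸ hx)

lemma exists_mem_Ioo_zero_one_mem_neg_mem {U V : Set ℝ} (hU : U ∈ 𝓝 1) (hV : V ∈ 𝓝 (-1)) :
    ∃ z ∈ Ioo 0 1, z ∈ U ∧ -z ∈ V := by
  have hV' : ∀ᶠ z in 𝓝 (1 : ℝ), -z ∈ V := (continuous_neg.tendsto' 1 (-1) rfl).eventually hV
  have hIoo : ∀ᶠ z in 𝓝[<] (1 : ℝ), z ∈ Ioo 0 1 := Ioo_mem_nhdsLT one_pos
  exact (hIoo.and (nhdsWithin_le_nhds (inter_mem hU hV'))).exists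

/-- For the `ℤ/2`-partial action `σ_0 = id` on `X = [-2,2]`, `σ_1(x) = -x` on
`(-1,1)`: every set `((L,M))` (`L, M ⊆ X` compact) is compact (`ℤ/2` carries
the discrete topology), yet the orbit space is not Hausdorff: the orbits of `1`
and `-1` are distinct, but every invariant relatively open set containing `1`
meets every invariant relatively open set containing `-1`. -/
theorem zmod2_partial_action_orbit_space_not_hausdorff :
    (∀ L M : Set ℝ, L ⊆ Set.Icc (-2) 2 → M ⊆ Set.Icc (-2) 2 → IsCompact L → IsCompact M →
      @IsCompact (ZMod 2) ⊥ {t : ZMod 2 | ((act14 t '' (L ∩ dom14 (-t))) ∩ M).Nonempty}) ∧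
    orb14 1 ≠ orb14 (-1) ∧
    (∀ U V : Set ℝ, U ⊆ Set.Icc (-2) 2 → V ⊆ Set.Icc (-2) 2 →
      (∃ U' : Set ℝ, IsOpen U' ∧ U = U' ∩ Set.Icc (-2) 2) →
      (∃ V' : Set ℝ, IsOpen V' ∧ V = V' ∩ Set.Icc (-2) 2) →
      inv14 U → inv14 V → (1 : ℝ) ∈ U → (-1 : ℝ) ∈ V → (U ∩ V).Nonempty) := by
  refine ⟨fun L M _ _ _ _ => @Set.Finite.isCompact _ ⊥ _ (Set.toFinite _), ?_, ?_⟩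
  · rw [orb14_eq_singleton (by norm_num) (by simp), orb14_eq_singleton (by norm_num) (by simp)]
    norm_num
  · rintro U V - - ⟨U', hU', rfl⟩ ⟨V', hV', rfl⟩ - hVinv h1 hm1
    obtain ⟨z, ⟨hz0, hz1⟩, hzU, hzV⟩ :=
      exists_mem_Ioo_zero_one_mem_neg_mem (hU'.mem_nhds h1.1) (hV'.mem_nhds hm1.1)
    have hnegz : -z ∈ V' ∩ Icc (-2) 2 := ⟨hzV, by constructor <;> linarith⟩
    refine ⟨z, ⟨hzU, by constructor <;> linarith⟩, ?_⟩
    simpa using hVinv.neg_mem hnegz ⟨by linarith, by linarith⟩
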